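/- arXiv:1011.1086 — 4 statements merged into one kernel-verified Lean document; each statement's English description precedes it below -/
import Mathlib

section
/- For every real p > 2 there exists a constant C > 0 such that, setting θ = p/(2p−2), every f ∈ L^p(S², σ) satisfies ‖G(f)‖_{L^∞(S²,σ)} ≤ C ‖f‖_{L^p(S²,σ)}^θ · ‖f‖_{L^1(S²,σ)}^{1−θ}. -/
open MeasureTheory Metric

noncomputable section

/-- The ambient Euclidean space `ℝ³`. -/
abbrev E3 : Type := EuclideanSpace ℝ (Fin 3)

/-- The surface measure on the unit sphere `S² ⊂ ℝ³`: the 2-dimensional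
Hausdorff measure restricted to the sphere. -/
def sphereMeasure : Measure E3 := (μH[2]).restrict (sphere (0 : E3) 1)

/-- The operator `G`: `G(f)(x) = (1/(4π)) ∫_{S²} f(y)/‖x−y‖ dσ(y)`. -/
def Gop (f : E3 → ℝ) (x : E3) : ℝ :=
  (1 / (4 * Real.pi)) * ∫ y, f y / ‖x - y‖ ∂sphereMeasure

/-! The surface measure is upper 2-regular: `σ(B(x, r)) ≤ c r²` for `x ∈ S²`. Small caps are
Lipschitz graphs over squares of side `2r`, caps of equal radius are congruent under a
reflection, and the compact sphere is covered by finitely many caps. Summing over the dyadic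
annuli `r/2^(j+1) < |x - y| ≤ r/2^j` then gives `∫_{B(x,r)} |x - y|^(-q) dσ ≤ S r^(2-q)`
for the conjugate exponent `q = p/(p-1) < 2`. Hölder's inequality on `B(x, r)` and
`|x - y|⁻¹ ≤ r⁻¹` off it give `|G f(x)| ≤ A ‖f‖_p r^((2-q)/q) + r⁻¹ ‖f‖_1` for every `r > 0`,
and the choice of `r` balancing the two terms gives the bound with `θ = q/2 = p/(2p-2)`. -/

open Filter Topology
open scoped NNReal ENNReal

lemma Real.add_eq_two_mul_rpow_mul_rpow {A B a θ : ℝ} (hA : 0 < A) (hB : 0 < B)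
    (hθa : θ * a = 1 - θ) :
    A * ((B / A) ^ θ) ^ a + ((B / A) ^ θ)⁻¹ * B = 2 * (A ^ θ * B ^ (1 - θ)) := by
  have hBA : 0 < B / A := div_pos hB hA
  rw [← Real.rpow_mul hBA.le, hθa, ← Real.rpow_neg hBA.le, Real.div_rpow hB.le hA.le,
    Real.div_rpow hB.le hA.le, Real.rpow_sub hA, Real.rpow_sub hB, Real.rpow_neg hA.le,
    Real.rpow_neg hB.le, Real.rpow_one, Real.rpow_one]
  have := Real.rpow_pos_of_pos hA θ
  have := Real.rpow_pos_of_pos hB θ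
  field_simp
  ring

lemma ENNReal.le_two_mul_rpow_mul_rpow_of_forall_le_add {I A B : ℝ≥0∞} {a θ : ℝ}
    (hA0 : A ≠ 0) (hA : A ≠ ⊤) (hB0 : B ≠ 0) (hB : B ≠ ⊤) (hθa : θ * a = 1 - θ)
    (h : ∀ r : ℝ, 0 < r → I ≤ A * ENNReal.ofReal (r ^ a) + ENNReal.ofReal r⁻¹ * B) :
    I ≤ 2 * A ^ θ * B ^ (1 - θ) := by
  obtain ⟨α, hα, rfl⟩ : ∃ α : ℝ, 0 < α ∧ ENNReal.ofReal α = A :=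
    ⟨A.toReal, ENNReal.toReal_pos hA0 hA, ENNReal.ofReal_toReal hA⟩
  obtain ⟨β, hβ, rfl⟩ : ∃ β : ℝ, 0 < β ∧ ENNReal.ofReal β = B :=
    ⟨B.toReal, ENNReal.toReal_pos hB0 hB, ENNReal.ofReal_toReal hB⟩
  convert h ((β / α) ^ θ) (by positivity) using 1
  rw [← ENNReal.ofReal_mul hα.le, ← ENNReal.ofReal_mul (by positivity),
    ← ENNReal.ofReal_add (by positivity) (by positivity),
    Real.add_eq_two_mul_rpow_mul_rpow hα hβ hθa, ENNReal.ofReal_mul zero_le_two,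
    ENNReal.ofReal_mul (by positivity), ENNReal.ofReal_rpow_of_pos hα,
    ENNReal.ofReal_rpow_of_pos hβ, ENNReal.ofReal_ofNat, mul_assoc]

lemma Real.div_two_pow_succ_rpow_neg_mul {r : ℝ} (hr : 0 < r) (c s d : ℝ) (j : ℕ) :
    (r / 2 ^ (j + 1)) ^ (-s) * (c * (r / 2 ^ j) ^ d) =
      c * 2 ^ s * r ^ (d - s) * (2 ^ (s - d)) ^ j := by
  have ht : (0:ℝ) < 2 ^ j := by positivity
  rw [Real.rpow_pow_comm zero_le_two, pow_succ, Real.div_rpow hr.le (by positivity),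
    Real.div_rpow hr.le ht.le, Real.mul_rpow ht.le zero_le_two, Real.rpow_neg hr.le,
    Real.rpow_neg ht.le, Real.rpow_neg zero_le_two, Real.rpow_sub hr, Real.rpow_sub ht]
  have := Real.rpow_pos_of_pos hr s
  have := Real.rpow_pos_of_pos ht s
  have := Real.rpow_pos_of_pos ht d
  have := Real.rpow_pos_of_pos two_pos s
  field_simp

section UpperRegular

variable {X : Type*} [PseudoMetricSpace X] {x : X}

lemma closedBall_subset_closedBall_zero_union_dyadic (r : ℝ) :
    closedBall x r ⊆ closedBall x 0 ∪
      ⋃ j : ℕ, closedBall x (r / 2 ^ j) \ closedBall x (r / 2 ^ (j + 1)) := by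
  intro y hy
  rcases (dist_nonneg (x := y) (y := x)).eq_or_lt with h | h
  · exact Or.inl (mem_closedBall.mpr h.ge)
  obtain ⟨j, hj, hj'⟩ :=
    exists_nat_pow_near ((one_le_div h).mpr (mem_closedBall.mp hy)) one_lt_two
  refine Or.inr (Set.mem_iUnion.mpr ⟨j, ?_, ?_⟩)
  · rw [mem_closedBall, le_div_iff₀ (by positivity)]
    rwa [le_div_iff₀ h, mul_comm] at hj
  · rw [mem_closedBall, not_le, div_lt_iff₀ (by positivity)]
    rwa [div_lt_iff₀ h, mul_comm] at hj'

variable [MeasurableSpace X] {μ : Measure X} {c d : ℝ}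

lemma measure_closedBall_zero_eq_zero_of_le_rpow (hd : 0 < d)
    (hμ : ∀ r > 0, μ (closedBall x r) ≤ ENNReal.ofReal (c * r ^ d)) :
    μ (closedBall x 0) = 0 := by
  have hlim : Tendsto (fun r : ℝ => ENNReal.ofReal (c * r ^ d)) (𝓝[>] 0) (𝓝 0) := by
    have h := tendsto_const_nhds (x := c).mul
      (Real.continuousAt_rpow_const 0 d (Or.inr hd.le)).tendsto
    rw [Real.zero_rpow hd.ne', mul_zero] at h
    simpa using ENNReal.tendsto_ofReal (h.mono_left nhdsWithin_le_nhds)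
  refine nonpos_iff_eq_zero.mp (ge_of_tendsto hlim ?_)
  filter_upwards [self_mem_nhdsWithin] with r hr
  exact (measure_mono (closedBall_subset_closedBall (le_of_lt hr))).trans (hμ r hr)

lemma setLIntegral_closedBall_edist_rpow_neg_le [OpensMeasurableSpace X] (hc : 0 ≤ c)
    (hd : 0 < d) {s : ℝ} (hs : 0 ≤ s) (hsd : s < d)
    (hμ : ∀ r > 0, μ (closedBall x r) ≤ ENNReal.ofReal (c * r ^ d)) {r : ℝ} (hr : 0 < r) :
    ∫⁻ y in closedBall x r, edist x y ^ (-s) ∂μ ≤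
      ENNReal.ofReal (c * 2 ^ s / (1 - 2 ^ (s - d)) * r ^ (d - s)) := by
  set A : ℕ → Set X := fun j => closedBall x (r / 2 ^ j) \ closedBall x (r / 2 ^ (j + 1))
  set b : ℝ := 2 ^ (s - d)
  have hb : b < 1 := Real.rpow_lt_one_of_one_lt_of_neg one_lt_two (by linarith)
  have hterm : ∀ j, ∫⁻ y in A j, edist x y ^ (-s) ∂μ ≤
      ENNReal.ofReal (c * 2 ^ s * r ^ (d - s) * b ^ j) := by
    intro j
    have hρ : 0 < r / 2 ^ (j + 1) := by positivity
    have hkernel :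
        ∀ y ∈ A j, edist x y ^ (-s) ≤ ENNReal.ofReal ((r / 2 ^ (j + 1)) ^ (-s)) := by
      intro y hy
      have hy' : r / 2 ^ (j + 1) ≤ dist x y := by
        rw [dist_comm]; exact (not_le.mp (mem_closedBall.not.mp hy.2)).le
      rw [← ENNReal.ofReal_rpow_of_pos hρ, ENNReal.rpow_neg, ENNReal.rpow_neg, edist_dist]
      exact ENNReal.inv_le_inv.mpr (ENNReal.rpow_le_rpow (ENNReal.ofReal_le_ofReal hy') hs)
    calc ∫⁻ y in A j, edist x y ^ (-s) ∂μ
        ≤ ∫⁻ _ in A j, ENNReal.ofReal ((r / 2 ^ (j + 1)) ^ (-s)) ∂μ :=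
          setLIntegral_mono' (measurableSet_closedBall.diff measurableSet_closedBall) hkernel
      _ = ENNReal.ofReal ((r / 2 ^ (j + 1)) ^ (-s)) * μ (A j) := setLIntegral_const _ _
      _ ≤ ENNReal.ofReal ((r / 2 ^ (j + 1)) ^ (-s)) * ENNReal.ofReal (c * (r / 2 ^ j) ^ d) := by
          gcongr
          exact (measure_mono Set.sdiff_subset).trans (hμ _ (by positivity))
      _ = ENNReal.ofReal (c * 2 ^ s * r ^ (d - s) * b ^ j) := by
          rw [← ENNReal.ofReal_mul (by positivity), Real.div_two_pow_succ_rpow_neg_mul hr]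
  calc ∫⁻ y in closedBall x r, edist x y ^ (-s) ∂μ
      ≤ ∫⁻ y in closedBall x 0 ∪ ⋃ j, A j, edist x y ^ (-s) ∂μ :=
        lintegral_mono_set (closedBall_subset_closedBall_zero_union_dyadic r)
    _ ≤ ∫⁻ y in closedBall x 0, edist x y ^ (-s) ∂μ +
          ∫⁻ y in ⋃ j, A j, edist x y ^ (-s) ∂μ :=
        lintegral_union_le _ _ _
    _ = ∫⁻ y in ⋃ j, A j, edist x y ^ (-s) ∂μ := by
        rw [setLIntegral_measure_zero _ _ (measure_closedBall_zero_eq_zero_of_le_rpow hd hμ),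
          zero_add]
    _ ≤ ∑' j, ∫⁻ y in A j, edist x y ^ (-s) ∂μ := lintegral_iUnion_le _ _
    _ ≤ ∑' j, ENNReal.ofReal (c * 2 ^ s * r ^ (d - s) * b ^ j) := ENNReal.tsum_le_tsum hterm
    _ = ENNReal.ofReal (c * 2 ^ s / (1 - b) * r ^ (d - s)) := by
        rw [← ENNReal.ofReal_tsum_of_nonneg (fun j => by positivity)
          ((summable_geometric_of_lt_one (by positivity) hb).mul_left _), tsum_mul_left,
          tsum_geometric_of_lt_one (by positivity) hb]
        ring_nf


lemma lintegral_enorm_mul_edist_inv_le [OpensMeasurableSpace X] {E : Type*}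
    [NormedAddCommGroup E] {f : X → E} (hf : AEStronglyMeasurable f μ) {p q : ℝ}
    (hpq : p.HolderConjugate q) {r : ℝ} (hr : 0 < r) :
    ∫⁻ y, ‖f y‖ₑ * (edist x y)⁻¹ ∂μ ≤
      eLpNorm f (ENNReal.ofReal p) μ *
          (∫⁻ y in closedBall x r, edist x y ^ (-q) ∂μ) ^ (1 / q) +
        ENNReal.ofReal r⁻¹ * eLpNorm f 1 μ := by
  rw [← lintegral_add_compl _ (measurableSet_closedBall (x := x) (ε := r))]
  gcongr ?_ + ?_
  · have hkernel : Measurable fun y => (edist x y)⁻¹ :=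
      (continuous_const.edist continuous_id).measurable.inv
    have hNp : eLpNorm f (ENNReal.ofReal p) μ = (∫⁻ y, ‖f y‖ₑ ^ p ∂μ) ^ (1 / p) := by
      rw [eLpNorm_eq_lintegral_rpow_enorm_toReal (by simp [hpq.pos]) ENNReal.ofReal_ne_top,
        ENNReal.toReal_ofReal hpq.nonneg]
    calc ∫⁻ y in closedBall x r, ‖f y‖ₑ * (edist x y)⁻¹ ∂μ
        ≤ (∫⁻ y in closedBall x r, ‖f y‖ₑ ^ p ∂μ) ^ (1 / p) *
            (∫⁻ y in closedBall x r, ((edist x y)⁻¹) ^ q ∂μ) ^ (1 / q) :=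
          ENNReal.lintegral_mul_le_Lp_mul_Lq _ hpq hf.enorm.restrict hkernel.aemeasurable
      _ ≤ eLpNorm f (ENNReal.ofReal p) μ *
            (∫⁻ y in closedBall x r, edist x y ^ (-q) ∂μ) ^ (1 / q) := by
          rw [hNp]
          simp_rw [ENNReal.inv_rpow, ← ENNReal.rpow_neg]
          gcongr ?_ * _
          exact ENNReal.rpow_le_rpow (setLIntegral_le_lintegral _ _) (by simp [hpq.nonneg])
  · have hkernel : ∀ y ∈ (closedBall x r)ᶜ,
        ‖f y‖ₑ * (edist x y)⁻¹ ≤ ‖f y‖ₑ * ENNReal.ofReal r⁻¹ := by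
      intro y hy
      rw [ENNReal.ofReal_inv_of_pos hr, edist_dist, dist_comm]
      gcongr
      exact (not_le.mp (mem_closedBall.not.mp hy)).le
    calc ∫⁻ y in (closedBall x r)ᶜ, ‖f y‖ₑ * (edist x y)⁻¹ ∂μ
        ≤ ∫⁻ y in (closedBall x r)ᶜ, ‖f y‖ₑ * ENNReal.ofReal r⁻¹ ∂μ :=
          setLIntegral_mono' measurableSet_closedBall.compl hkernel
      _ ≤ ∫⁻ y, ‖f y‖ₑ * ENNReal.ofReal r⁻¹ ∂μ := setLIntegral_le_lintegral _ _
      _ = ENNReal.ofReal r⁻¹ * eLpNorm f 1 μ := by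
          rw [lintegral_mul_const' _ _ ENNReal.ofReal_ne_top, eLpNorm_one_eq_lintegral_enorm,
            mul_comm]

lemma exists_lintegral_enorm_mul_edist_inv_le [OpensMeasurableSpace X] [IsFiniteMeasure μ]
    {E : Type*} [NormedAddCommGroup E] (hc : 0 < c) {p q : ℝ} (hpq : p.HolderConjugate q)
    (hqd : q < d) :
    ∃ C > 0, ∀ x : X, (∀ r > 0, μ (closedBall x r) ≤ ENNReal.ofReal (c * r ^ d)) →
      ∀ f : X → E, MemLp f (ENNReal.ofReal p) μ →
        ∫⁻ y, ‖f y‖ₑ * (edist x y)⁻¹ ∂μ ≤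
          ENNReal.ofReal C * eLpNorm f (ENNReal.ofReal p) μ ^ (q / d) *
            eLpNorm f 1 μ ^ (1 - q / d) := by
  have hq : 1 < q := hpq.symm.lt
  have hd : 0 < d := by linarith
  set S := c * 2 ^ q / (1 - 2 ^ (q - d))
  have hS : 0 < S := div_pos (by positivity) (sub_pos.mpr
    (Real.rpow_lt_one_of_one_lt_of_neg one_lt_two (by linarith)))
  refine ⟨2 * S ^ (1 / d), by positivity, fun x hμ f hf => ?_⟩
  by_cases hf0 : f =ᵐ[μ] 0
  · calc ∫⁻ y, ‖f y‖ₑ * (edist x y)⁻¹ ∂μ = ∫⁻ _, 0 ∂μ := by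
          refine lintegral_congr_ae ?_
          filter_upwards [hf0] with y hy
          simp [hy]
      _ ≤ _ := by simp
  set Np := eLpNorm f (ENNReal.ofReal p) μ
  set N1 := eLpNorm f 1 μ
  have hNp0 : Np ≠ 0 := fun h => hf0 ((eLpNorm_eq_zero_iff hf.1 (by simp [hpq.pos])).mp h)
  have hN10 : N1 ≠ 0 := fun h => hf0 ((eLpNorm_eq_zero_iff hf.1 one_ne_zero).mp h)
  have hN1 : N1 ≠ ⊤ :=
    (hf.mono_exponent (by simpa using hpq.lt.le)).eLpNorm_ne_top
  have hsplit : ∀ r : ℝ, 0 < r → ∫⁻ y, ‖f y‖ₑ * (edist x y)⁻¹ ∂μ ≤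
      Np * ENNReal.ofReal (S ^ (1 / q)) * ENNReal.ofReal (r ^ ((d - q) / q)) +
        ENNReal.ofReal r⁻¹ * N1 := by
    intro r hr
    refine (lintegral_enorm_mul_edist_inv_le hf.1 hpq hr).trans ?_
    rw [mul_assoc, ← ENNReal.ofReal_mul (by positivity)]
    gcongr
    calc (∫⁻ y in closedBall x r, edist x y ^ (-q) ∂μ) ^ (1 / q)
        ≤ ENNReal.ofReal (S * r ^ (d - q)) ^ (1 / q) := by
          gcongr
          exact setLIntegral_closedBall_edist_rpow_neg_le hc.le hd (by linarith) hqd hμ hr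
      _ = ENNReal.ofReal (S ^ (1 / q) * r ^ ((d - q) / q)) := by
          rw [ENNReal.ofReal_rpow_of_nonneg (by positivity) (by positivity),
            Real.mul_rpow hS.le (by positivity), ← Real.rpow_mul hr.le, mul_one_div]
  have hθ : q / d * ((d - q) / q) = 1 - q / d := by
    field_simp
  calc ∫⁻ y, ‖f y‖ₑ * (edist x y)⁻¹ ∂μ
      ≤ 2 * (Np * ENNReal.ofReal (S ^ (1 / q))) ^ (q / d) * N1 ^ (1 - q / d) :=
        ENNReal.le_two_mul_rpow_mul_rpow_of_forall_le_add
          (mul_ne_zero hNp0 (by simp [Real.rpow_pos_of_pos hS]))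
          (ENNReal.mul_ne_top hf.eLpNorm_ne_top ENNReal.ofReal_ne_top) hN10 hN1 hθ hsplit
    _ = ENNReal.ofReal (2 * S ^ (1 / d)) * Np ^ (q / d) * N1 ^ (1 - q / d) := by
        rw [ENNReal.mul_rpow_of_nonneg _ _ (by positivity),
          ENNReal.ofReal_rpow_of_pos (by positivity), ← Real.rpow_mul hS.le,
          ENNReal.ofReal_mul zero_le_two, ENNReal.ofReal_ofNat]
        field_simp
        ring

end UpperRegular

lemma E3.norm_sq (y : E3) : ‖y‖ ^ 2 = y 0 ^ 2 + y 1 ^ 2 + y 2 ^ 2 := by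
  simp [EuclideanSpace.norm_sq_eq, Fin.sum_univ_three]

lemma E3.dist_sq (y z : E3) :
    dist y z ^ 2 = (y 0 - z 0) ^ 2 + (y 1 - z 1) ^ 2 + (y 2 - z 2) ^ 2 := by
  rw [dist_eq_norm, E3.norm_sq]; rfl

def northPole : E3 := !₂[0, 0, 1]

lemma norm_northPole : ‖northPole‖ = 1 := by
  rw [← sq_eq_sq₀ (norm_nonneg _) zero_le_one, E3.norm_sq]; simp [northPole]

def sphereGraph (u : Fin 2 → ℝ) : E3 := !₂[u 0, u 1, √(1 - (u 0 ^ 2 + u 1 ^ 2))]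

lemma abs_sqrt_one_sub_sub_le {u v : Fin 2 → ℝ} (hu : u ∈ closedBall 0 (1 / 2))
    (hv : v ∈ closedBall 0 (1 / 2)) :
    |√(1 - (u 0 ^ 2 + u 1 ^ 2)) - √(1 - (v 0 ^ 2 + v 1 ^ 2))| ≤ 2 * dist u v := by
  have hcoord : ∀ w ∈ closedBall (0 : Fin 2 → ℝ) (1 / 2), ∀ i, |w i| ≤ 1 / 2 :=
    fun w hw i => (norm_le_pi_norm w i).trans (mem_closedBall_zero_iff.mp hw)
  have hsqrt : ∀ w ∈ closedBall (0 : Fin 2 → ℝ) (1 / 2),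
      1 / 2 ≤ √(1 - (w 0 ^ 2 + w 1 ^ 2)) ∧
        √(1 - (w 0 ^ 2 + w 1 ^ 2)) ^ 2 = 1 - (w 0 ^ 2 + w 1 ^ 2) := by
    intro w hw
    have h0 := sq_le_sq' (abs_le.mp (hcoord w hw 0)).1 (abs_le.mp (hcoord w hw 0)).2
    have h1 := sq_le_sq' (abs_le.mp (hcoord w hw 1)).1 (abs_le.mp (hcoord w hw 1)).2
    exact ⟨(Real.le_sqrt (by norm_num) (by linarith)).mpr (by linarith),
      Real.sq_sqrt (by linarith)⟩
  obtain ⟨hg, hg2⟩ := hsqrt u hu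
  obtain ⟨hh, hh2⟩ := hsqrt v hv
  set g := √(1 - (u 0 ^ 2 + u 1 ^ 2))
  set h := √(1 - (v 0 ^ 2 + v 1 ^ 2))
  have hprod : (g - h) * (g + h) = (v 0 - u 0) * (u 0 + v 0) + (v 1 - u 1) * (u 1 + v 1) := by
    linear_combination hg2 - hh2
  have hterm : ∀ i, |(v i - u i) * (u i + v i)| ≤ dist u v := fun i => by
    rw [abs_mul, abs_sub_comm, ← mul_one (dist u v)]
    refine mul_le_mul (by simpa [Real.dist_eq] using dist_le_pi_dist u v i) ?_ (abs_nonneg _)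
      dist_nonneg
    exact (abs_add_le _ _).trans (by linarith [hcoord u hu i, hcoord v hv i])
  calc |g - h| ≤ |g - h| * (g + h) := le_mul_of_one_le_right (abs_nonneg _) (by linarith)
    _ = |(v 0 - u 0) * (u 0 + v 0) + (v 1 - u 1) * (u 1 + v 1)| := by
        rw [← hprod, abs_mul, abs_of_pos (by linarith : 0 < g + h)]
    _ ≤ 2 * dist u v := (abs_add_le _ _).trans (by linarith [hterm 0, hterm 1])

lemma lipschitzOnWith_sphereGraph : LipschitzOnWith 5 sphereGraph (closedBall 0 (1 / 2)) := by
  refine LipschitzOnWith.of_dist_le_mul fun u hu v hv => ?_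
  have hsq : ∀ i, (u i - v i) ^ 2 ≤ dist u v ^ 2 := fun i => by
    rw [← sq_abs, ← Real.dist_eq]
    exact pow_le_pow_left₀ (abs_nonneg _) (by simpa using dist_le_pi_dist u v i) 2
  have hh := abs_sqrt_one_sub_sub_le hu hv
  have hh2 := sq_le_sq' (abs_le.mp hh).1 (abs_le.mp hh).2
  have hdist : dist (sphereGraph u) (sphereGraph v) ^ 2 ≤ (5 * dist u v) ^ 2 := by
    rw [E3.dist_sq]
    simp only [sphereGraph, PiLp.toLp_apply, Matrix.cons_val]
    nlinarith [hsq 0, hsq 1]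
  push_cast
  exact (sq_le_sq₀ dist_nonneg (by positivity)).mp hdist

lemma sphere_inter_closedBall_northPole_subset {r : ℝ} (hr : r ≤ 1 / 2) :
    sphere 0 1 ∩ closedBall northPole r ⊆ sphereGraph '' closedBall 0 r := by
  rintro y ⟨hy, hyr⟩
  have hy1 : y 0 ^ 2 + y 1 ^ 2 + y 2 ^ 2 = 1 := by
    rw [← E3.norm_sq, mem_sphere_zero_iff_norm.mp hy, one_pow]
  have hr0 : 0 ≤ r := dist_nonneg.trans hyr
  have hyr2 : y 0 ^ 2 + y 1 ^ 2 + (y 2 - 1) ^ 2 ≤ r ^ 2 := by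
    have := E3.dist_sq y northPole
    simp only [northPole, PiLp.toLp_apply, Matrix.cons_val, sub_zero] at this
    rw [← this]
    exact pow_le_pow_left₀ dist_nonneg hyr 2
  have hy2 : 0 ≤ y 2 := by nlinarith
  refine ⟨![y 0, y 1], ?_, ?_⟩
  · rw [mem_closedBall_zero_iff, pi_norm_le_iff_of_nonneg hr0]
    intro i
    rw [Real.norm_eq_abs, ← sq_le_sq₀ (abs_nonneg _) hr0, sq_abs]
    fin_cases i <;> simp <;> nlinarith
  · have hz : √(1 - (y 0 ^ 2 + y 1 ^ 2)) = y 2 := by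
      rw [show 1 - (y 0 ^ 2 + y 1 ^ 2) = y 2 ^ 2 by linarith, Real.sqrt_sq hy2]
    ext i
    fin_cases i <;> simp [sphereGraph, hz]

lemma hausdorffMeasure_sphere_inter_closedBall_northPole_le {r : ℝ} (hr0 : 0 ≤ r)
    (hr : r ≤ 1 / 2) :
    μH[2] (sphere (0 : E3) 1 ∩ closedBall northPole r) ≤ ENNReal.ofReal (100 * r ^ 2) := by
  have hvol : μH[2] (closedBall (0 : Fin 2 → ℝ) r) = ENNReal.ofReal (4 * r ^ 2) := by
    rw [show (2 : ℝ) = Fintype.card (Fin 2) by simp, hausdorffMeasure_pi_real,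
      Real.volume_pi_closedBall _ hr0, Fintype.card_fin]
    ring_nf
  calc μH[2] (sphere (0 : E3) 1 ∩ closedBall northPole r)
      ≤ μH[2] (sphereGraph '' closedBall 0 r) :=
        measure_mono (sphere_inter_closedBall_northPole_subset hr)
    _ ≤ (5 : ℝ≥0) ^ (2 : ℝ) * μH[2] (closedBall (0 : Fin 2 → ℝ) r) :=
        (lipschitzOnWith_sphereGraph.mono
          (closedBall_subset_closedBall hr)).hausdorffMeasure_image_le zero_le_two
    _ = ENNReal.ofReal (100 * r ^ 2) := by
        rw [hvol, ENNReal.rpow_two, show (100 : ℝ) * r ^ 2 = 5 ^ 2 * (4 * r ^ 2) by ring,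
          ENNReal.ofReal_mul (by positivity)]
        norm_num

lemma hausdorffMeasure_sphere_inter_closedBall_eq_of_norm_eq {F : Type*} [NormedAddCommGroup F]
    [InnerProductSpace ℝ F] [MeasurableSpace F] [BorelSpace F] {x y : F} (h : ‖x‖ = ‖y‖)
    (d ρ r : ℝ) :
    μH[d] (sphere 0 ρ ∩ closedBall x r) = μH[d] (sphere 0 ρ ∩ closedBall y r) := by
  set R := (Submodule.reflection (ℝ ∙ (x - y))ᗮ).toIsometryEquiv
  have hR : R '' (sphere 0 ρ ∩ closedBall x r) = sphere 0 ρ ∩ closedBall y r := by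
    rw [Set.image_inter R.injective, R.image_sphere, R.image_closedBall]
    simp [R, Submodule.reflection_sub h]
  rw [← hR, R.hausdorffMeasure_image]

lemma sphereMeasure_closedBall_le_of_le_half {x : E3} (hx : x ∈ sphere 0 1) {r : ℝ}
    (hr0 : 0 ≤ r) (hr : r ≤ 1 / 2) :
    sphereMeasure (closedBall x r) ≤ ENNReal.ofReal (100 * r ^ 2) := by
  rw [sphereMeasure, Measure.restrict_apply measurableSet_closedBall, Set.inter_comm,
    hausdorffMeasure_sphere_inter_closedBall_eq_of_norm_eq
      (norm_northPole.trans (mem_sphere_zero_iff_norm.mp hx).symm).symm]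
  exact hausdorffMeasure_sphere_inter_closedBall_northPole_le hr0 hr

instance : IsFiniteMeasure sphereMeasure := by
  obtain ⟨t, hts, ht, hcover⟩ := finite_cover_balls_of_compact (isCompact_sphere (0 : E3) 1)
    one_half_pos
  have hsphere : sphereMeasure Set.univ = sphereMeasure (sphere 0 1) := by
    rw [sphereMeasure, Measure.restrict_apply_univ, Measure.restrict_apply_self]
  refine ⟨hsphere.trans_lt ((measure_mono (hcover.trans
    (Set.iUnion₂_mono fun x _ => ball_subset_closedBall))).trans_lt ?_)⟩
  refine measure_biUnion_lt_top ht fun x hx => ?_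
  exact (sphereMeasure_closedBall_le_of_le_half (hts hx) one_half_pos.le le_rfl).trans_lt
    ENNReal.ofReal_lt_top

lemma exists_sphereMeasure_closedBall_le :
    ∃ c > 0, ∀ x ∈ sphere (0 : E3) 1, ∀ r > 0,
      sphereMeasure (closedBall x r) ≤ ENNReal.ofReal (c * r ^ (2 : ℝ)) := by
  set M := (sphereMeasure Set.univ).toReal
  refine ⟨max 100 (4 * M), by positivity, fun x hx r hr => ?_⟩
  rw [Real.rpow_two]
  rcases le_or_gt r (1 / 2) with hr' | hr'
  · refine (sphereMeasure_closedBall_le_of_le_half hx hr.le hr').trans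
      (ENNReal.ofReal_le_ofReal ?_)
    gcongr
    exact le_max_left _ _
  · have hM : 4 * M * r ^ 2 ≤ max 100 (4 * M) * r ^ 2 := by gcongr; exact le_max_right _ _
    calc sphereMeasure (closedBall x r) ≤ sphereMeasure Set.univ :=
          measure_mono (Set.subset_univ _)
      _ = ENNReal.ofReal M := (ENNReal.ofReal_toReal (measure_ne_top _ _)).symm
      _ ≤ ENNReal.ofReal (max 100 (4 * M) * r ^ 2) := by
        have hM0 : 0 ≤ M := ENNReal.toReal_nonneg
        have hr2 : 0 ≤ 4 * r ^ 2 - 1 := by nlinarith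
        exact ENNReal.ofReal_le_ofReal (by nlinarith [mul_nonneg hM0 hr2])

lemma enorm_Gop_le (f : E3 → ℝ) (x : E3) :
    ‖Gop f x‖ₑ ≤ ∫⁻ y, ‖f y‖ₑ * (edist x y)⁻¹ ∂sphereMeasure := by
  have hconst : ‖1 / (4 * Real.pi)‖ₑ ≤ 1 := by
    rw [← ofReal_norm, Real.norm_of_nonneg (by positivity), ← ENNReal.ofReal_one]
    exact ENNReal.ofReal_le_ofReal
      ((div_le_one (by positivity)).mpr (by linarith [Real.pi_gt_three]))
  calc ‖Gop f x‖ₑ ≤ 1 * ‖∫ y, f y / ‖x - y‖ ∂sphereMeasure‖ₑ := by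
        rw [Gop, enorm_mul]; gcongr
    _ ≤ ∫⁻ y, ‖f y / ‖x - y‖‖ₑ ∂sphereMeasure := by
        rw [one_mul]; exact enorm_integral_le_lintegral_enorm _
    _ ≤ ∫⁻ y, ‖f y‖ₑ * (edist x y)⁻¹ ∂sphereMeasure := by
        refine lintegral_mono fun y => ?_
        rcases eq_or_ne x y with rfl | hxy
        · simp
        rw [div_eq_mul_inv, enorm_mul, enorm_inv (norm_ne_zero_iff.mpr (sub_ne_zero.mpr hxy)),
          enorm_norm, edist_eq_enorm_sub]

/-- For every `p > 2` there is `C > 0` such that, with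
`θ = p/(2p−2)`, every `f ∈ L^p(S²,σ)` satisfies
`‖G(f)‖_{L^∞} ≤ C ‖f‖_{L^p}^θ ‖f‖_{L^1}^{1−θ}`. -/
theorem Gop_Linfty_interpolation_bound (p : ℝ) (hp : 2 < p) :
    ∃ C : ℝ, 0 < C ∧ ∀ f : E3 → ℝ, MemLp f (ENNReal.ofReal p) sphereMeasure →
      eLpNorm (Gop f) ⊤ sphereMeasure ≤
        ENNReal.ofReal C *
          (eLpNorm f (ENNReal.ofReal p) sphereMeasure) ^ (p / (2 * p - 2)) *
          (eLpNorm f 1 sphereMeasure) ^ (1 - p / (2 * p - 2)) := by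
  have hpq : p.HolderConjugate (Real.conjExponent p) := .conjExponent (by linarith)
  have hθ : Real.conjExponent p / 2 = p / (2 * p - 2) := by
    rw [Real.conjExponent, div_div, mul_comm, mul_sub, mul_one]
  obtain ⟨c, hc, hball⟩ := exists_sphereMeasure_closedBall_le
  obtain ⟨C, hC, hbound⟩ := exists_lintegral_enorm_mul_edist_inv_le (μ := sphereMeasure)
    (E := ℝ) (d := 2) hc hpq (by rw [Real.conjExponent, div_lt_iff₀ (by linarith)]; linarith)
  refine ⟨C, hC, fun f hf => ?_⟩
  rw [← hθ, eLpNorm_exponent_top]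
  refine eLpNormEssSup_le_of_ae_enorm_bound ?_
  filter_upwards [ae_restrict_mem (μ := μH[2]) isClosed_sphere.measurableSet] with x hx
  exact (enorm_Gop_le f x).trans (hbound x (hball x hx) f hf)
end
end

section
/- There exists a constant C > 0 such that for all real numbers r, r' > 0 and all unit vectors σ, σ' ∈ ℝ³ with σ ≠ σ', | 1/‖σ − σ'‖ − 1/‖rσ − r'σ'‖ | ≤ C (min(|r − 1|, 1) + min(|r' − 1|, 1)) (1 + 1/max(r, r')) / ‖σ − σ'‖². -/
noncomputable section

/-!
Write `d = ‖σ - σ'‖`, `D = ‖r • σ - r' • σ'‖` and `M = max r r'`, so that the difference is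
`|D - d| / (d * D)`. The triangle inequality bounds `|D - d|` by `|r - 1| + |r' - 1|`, and for
`0 ≤ r ≤ M` one has `|r - 1| ≤ min |r - 1| 1 * (M + 1)`. The law of cosines
`D² = (r - r')² + r r' d²` together with `d ≤ 2` gives `2 D ≥ (r + r') d ≥ M d`, so the bound
holds with `C = 2`.
-/

section UnitVectors

variable {F : Type*} {σ σ' : F}

theorem abs_norm_smul_sub_smul_sub_norm_sub_le [SeminormedAddCommGroup F] [NormedSpace ℝ F]
    (hσ : ‖σ‖ = 1) (hσ' : ‖σ'‖ = 1) (r r' : ℝ) :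
    |‖r • σ - r' • σ'‖ - ‖σ - σ'‖| ≤ |r - 1| + |r' - 1| :=
  calc |‖r • σ - r' • σ'‖ - ‖σ - σ'‖| ≤ ‖(r • σ - r' • σ') - (σ - σ')‖ := abs_norm_sub_norm_le _ _
    _ = ‖(r - 1) • σ - (r' - 1) • σ'‖ := by congr 1; module
    _ ≤ ‖(r - 1) • σ‖ + ‖(r' - 1) • σ'‖ := norm_sub_le _ _
    _ = |r - 1| + |r' - 1| := by rw [norm_smul, norm_smul, hσ, hσ', Real.norm_eq_abs,
        Real.norm_eq_abs, mul_one, mul_one]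

variable [SeminormedAddCommGroup F] [InnerProductSpace ℝ F]

theorem norm_smul_sub_smul_sq_of_norm_eq_one (hσ : ‖σ‖ = 1) (hσ' : ‖σ'‖ = 1) (r r' : ℝ) :
    ‖r • σ - r' • σ'‖ ^ 2 = (r - r') ^ 2 + r * r' * ‖σ - σ'‖ ^ 2 := by
  rw [norm_sub_sq_real, norm_sub_sq_real, norm_smul, norm_smul, real_inner_smul_left,
    real_inner_smul_right, hσ, hσ', Real.norm_eq_abs, Real.norm_eq_abs, mul_pow, mul_pow, sq_abs,
    sq_abs]
  ring

theorem add_mul_norm_sub_le_two_mul_norm_smul_sub_smul (hσ : ‖σ‖ = 1) (hσ' : ‖σ'‖ = 1)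
    (r r' : ℝ) :
    (r + r') * ‖σ - σ'‖ ≤ 2 * ‖r • σ - r' • σ'‖ := by
  have hd : ‖σ - σ'‖ ≤ 2 := (norm_sub_le _ _).trans_eq (by rw [hσ, hσ']; norm_num)
  have hcos := norm_smul_sub_smul_sq_of_norm_eq_one hσ hσ' r r'
  refine le_of_sq_le_sq ?_ (by positivity)
  have hd2 : ‖σ - σ'‖ ^ 2 ≤ 4 := by nlinarith [norm_nonneg (σ - σ')]
  nlinarith [mul_le_mul_of_nonneg_left hd2 (sq_nonneg (r - r'))]

end UnitVectors

theorem abs_sub_one_le_min_mul_add_one {r M : ℝ} (hr : 0 ≤ r) (hrM : r ≤ M) :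
    |r - 1| ≤ min |r - 1| 1 * (M + 1) := by
  rcases le_total |r - 1| 1 with h | h
  · rw [min_eq_left h]
    nlinarith [abs_nonneg (r - 1)]
  · rw [min_eq_right h, one_mul, abs_sub_le_iff]
    constructor <;> linarith

/-- The difference between the Coulomb kernel on the sphere
and the Coulomb kernel in `ℝ³`:
`|1/‖σ−σ'‖ − 1/‖rσ−r'σ'‖| ≤ C (min(|r−1|,1) + min(|r'−1|,1))(1 + 1/max(r,r'))/‖σ−σ'‖²`. -/
theorem kernel_difference_bound :
    ∃ C : ℝ, 0 < C ∧ ∀ r r' : ℝ, 0 < r → 0 < r' →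
      ∀ σ σ' : E3, ‖σ‖ = 1 → ‖σ'‖ = 1 → σ ≠ σ' →
        |1 / ‖σ - σ'‖ - 1 / ‖r • σ - r' • σ'‖| ≤
          C * (min |r - 1| 1 + min |r' - 1| 1) * (1 + 1 / max r r') / ‖σ - σ'‖ ^ 2 := by
  refine ⟨2, two_pos, fun r r' hr hr' σ σ' hσ hσ' hne => ?_⟩
  set d := ‖σ - σ'‖
  set D := ‖r • σ - r' • σ'‖
  set M := max r r'
  have hd : 0 < d := norm_pos_iff.2 (sub_ne_zero.2 hne)
  have hM : 0 < M := lt_max_of_lt_left hr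
  have hMD : M * d ≤ 2 * D :=
    (mul_le_mul_of_nonneg_right (max_le_add_of_nonneg hr.le hr'.le) hd.le).trans
      (add_mul_norm_sub_le_two_mul_norm_smul_sub_smul hσ hσ' r r')
  have hD : 0 < D := by nlinarith [mul_pos hM hd]
  have hnum : |D - d| ≤ (min |r - 1| 1 + min |r' - 1| 1) * (M + 1) := by
    have hr1 := abs_sub_one_le_min_mul_add_one hr.le (le_max_left r r')
    have hr'1 := abs_sub_one_le_min_mul_add_one hr'.le (le_max_right r r')
    linarith [abs_norm_smul_sub_smul_sub_norm_sub_le hσ hσ' r r']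
  calc |1 / d - 1 / D| = |D - d| / (d * D) := by
        rw [one_div, one_div, inv_sub_inv hd.ne' hD.ne', abs_div, abs_of_pos (mul_pos hd hD)]
    _ ≤ (min |r - 1| 1 + min |r' - 1| 1) * (M + 1) / (d * (M * d / 2)) :=
        div_le_div₀ (by positivity) hnum (by positivity) (by nlinarith)
    _ = 2 * (min |r - 1| 1 + min |r' - 1| 1) * (1 + 1 / M) / d ^ 2 := by
        field_simp
end
end

section
/- Let C₁ > 0. There exists a constant c₁ > 0, depending only on C₁, with the following property: for every continuously differentiable function W : ℝ → ℝ satisfying W(x) ≥ 1 and |W'(x)| ≤ C₁ W(x) for all x ≥ 0, and for every twice continuously differentiable function u : ℝ → ℂ with compact support satisfying u(0) = 0, one has ( ∫₀^∞ |u''(x)|² dx )^{1/2} + ( ∫₀^∞ W(x)² |u(x)|² dx )^{1/2} + ( ∫₀^∞ W(x) |u'(x)|² dx )^{1/2} ≤ c₁^{−1} ( ∫₀^∞ |−u''(x) + W(x)u(x)|² dx )^{1/2}. -/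
/-!
Write `f = -u'' + W u`. Pairing `f` with `u` and with `W u` and integrating by parts (no boundary
terms, since `u 0 = 0` and `u` has compact support) gives
`∫ |u'|² + ∫ W |u|² = Re ∫ f ū` and `∫ W |u'|² + ∫ W² |u|² = Re ∫ W f ū - Re ∫ W' u' ū`.
Young's inequality, with `W ≥ 1` and `|W'| ≤ C₁ W`, turns these into `∫ W |u|² ≤ ‖f‖²` and
`∫ W |u'|² + ∫ W² |u|² ≤ (1 + C₁²) ‖f‖²`; finally `u'' = W u - f` bounds `‖u''‖²`.
Only the real inner product `Re (z w̄)` of `ℂ` enters, so the argument works verbatim for `u`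
with values in any real inner product space.
-/

open MeasureTheory

noncomputable section

open Set
open scoped RealInnerProductSpace

theorem setIntegral_Ioi_le_of_le_add_deriv {a b g : ℝ → ℝ} {t : ℝ} (hg : ContDiff ℝ 1 g)
    (hgc : HasCompactSupport g) (hgt : g t = 0) (ha : IntegrableOn a (Ioi t))
    (hb : IntegrableOn b (Ioi t)) (h : ∀ x ∈ Ioi t, a x ≤ b x + deriv g x) :
    ∫ x in Ioi t, a x ≤ ∫ x in Ioi t, b x := by
  have hg' : IntegrableOn (deriv g) (Ioi t) :=
    ((hg.continuous_deriv le_rfl).integrable_of_hasCompactSupport hgc.deriv).integrableOn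
  calc ∫ x in Ioi t, a x ≤ ∫ x in Ioi t, (b x + deriv g x) :=
        setIntegral_mono_on ha (hb.add hg') measurableSet_Ioi h
    _ = ∫ x in Ioi t, b x := by
        rw [integral_add hb hg', hgc.integral_Ioi_deriv_eq hg, hgt, neg_zero, add_zero]

theorem HasCompactSupport.integrable_mul_norm_sq {F : Type*} [NormedAddCommGroup F]
    {ψ : ℝ → ℝ} {g : ℝ → F} (hgc : HasCompactSupport g) (hψ : Continuous ψ)
    (hg : Continuous g) : Integrable fun x => ψ x * ‖g x‖ ^ 2 :=
  (hψ.mul (hg.norm.pow 2)).integrable_of_hasCompactSupport <|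
    hgc.mono <| Function.support_subset_iff'.2 fun x hx => by
      simp [Function.notMem_support.1 hx]

theorem HasCompactSupport.integrable_norm_sq {F : Type*} [NormedAddCommGroup F] {g : ℝ → F}
    (hgc : HasCompactSupport g) (hg : Continuous g) : Integrable fun x => ‖g x‖ ^ 2 := by
  simpa using hgc.integrable_mul_norm_sq (continuous_const (y := (1 : ℝ))) hg

section InnerProductSpace

variable {E : Type*} [NormedAddCommGroup E] [InnerProductSpace ℝ E]

theorem real_inner_neg_add_smul_self (a p : E) (w : ℝ) :
    ⟪-a + w • p, p⟫ = -⟪a, p⟫ + w * ‖p‖ ^ 2 := by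
  rw [inner_add_left, inner_neg_left, real_inner_smul_left, real_inner_self_eq_norm_sq]

/- With `f = -a + w • p`, the right side minus the left side is
`‖f - p‖² + (w - 1) ‖p‖² + 2 ‖v‖²`. -/
theorem mul_norm_sq_le_norm_neg_add_smul_sq (a p v : E) {w : ℝ} (hw : 1 ≤ w) :
    w * ‖p‖ ^ 2 ≤ ‖-a + w • p‖ ^ 2 + 2 * (‖v‖ ^ 2 + ⟪a, p⟫) := by
  have h := real_inner_neg_add_smul_self a p w
  nlinarith [norm_sub_sq_real (-a + w • p) p, sq_nonneg ‖-a + w • p - p‖, sq_nonneg ‖v‖,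
    mul_nonneg (sub_nonneg.2 hw) (sq_nonneg ‖p‖)]

/- With `f = -a + w • p`, the right side minus the left side is at least
`‖f - w • p‖² + w (‖v‖ - C ‖p‖)²`. -/
theorem weighted_norm_sq_le_norm_neg_add_smul_sq (a p v : E) {w w' C : ℝ} (hw : 0 ≤ w)
    (hw' : |w'| ≤ C * w) :
    w * ‖v‖ ^ 2 + w ^ 2 * ‖p‖ ^ 2 ≤
      ‖-a + w • p‖ ^ 2 + C ^ 2 * (w * ‖p‖ ^ 2) + 2 * (w' * ⟪v, p⟫ + w * (‖v‖ ^ 2 + ⟪a, p⟫)) := by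
  have h := real_inner_neg_add_smul_self a p w
  have hsq : 0 ≤ ‖-a + w • p - w • p‖ ^ 2 := sq_nonneg _
  rw [norm_sub_sq_real, real_inner_smul_right, norm_smul, Real.norm_eq_abs, mul_pow,
    sq_abs] at hsq
  have hvp : -(w' * ⟪v, p⟫) ≤ C * w * (‖v‖ * ‖p‖) :=
    calc -(w' * ⟪v, p⟫) ≤ |w'| * |⟪v, p⟫| := by rw [← abs_mul]; exact neg_le_abs _
      _ ≤ C * w * (‖v‖ * ‖p‖) :=
        mul_le_mul hw' (abs_real_inner_le_norm v p) (abs_nonneg _) ((abs_nonneg _).trans hw')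
  nlinarith [mul_nonneg hw (sq_nonneg (‖v‖ - C * ‖p‖))]

theorem norm_sq_le_norm_neg_add_smul_sq (a p : E) (w : ℝ) :
    ‖a‖ ^ 2 ≤ 2 * (w ^ 2 * ‖p‖ ^ 2) + 2 * ‖-a + w • p‖ ^ 2 := by
  have h : ‖a‖ ≤ |w| * ‖p‖ + ‖-a + w • p‖ := by
    simpa [norm_smul] using norm_sub_le (w • p) (-a + w • p)
  nlinarith [sq_abs w, sq_nonneg (|w| * ‖p‖ - ‖-a + w • p‖), norm_nonneg a,
    mul_nonneg (abs_nonneg w) (norm_nonneg p)]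

variable {u : ℝ → E}

theorem hasDerivAt_mul_inner_deriv_self {φ : ℝ → ℝ} {φ' x : ℝ} (hφ : HasDerivAt φ φ' x)
    (hu : ContDiff ℝ 2 u) :
    HasDerivAt (fun y => φ y * ⟪deriv u y, u y⟫)
      (φ' * ⟪deriv u x, u x⟫ + φ x * (‖deriv u x‖ ^ 2 + ⟪deriv (deriv u) x, u x⟫)) x := by
  have hu' : HasDerivAt u (deriv u x) x := (hu.differentiable two_ne_zero x).hasDerivAt
  have hu'' : HasDerivAt (deriv u) (deriv (deriv u) x) x :=
    ((hu.deriv' (n := 1)).differentiable one_ne_zero x).hasDerivAt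
  refine (hφ.mul (hu''.inner ℝ hu')).congr_deriv ?_
  rw [real_inner_self_eq_norm_sq]

/- The extra term is the derivative of `2 φ ⟪u', u⟫`, which vanishes at `0` and near infinity:
this is the integration by parts `-∫ φ ⟪u'', u⟫ = ∫ φ ‖u'‖² + ∫ φ' ⟪u', u⟫`. -/
theorem setIntegral_Ioi_le_of_le_add_deriv_mul_inner {φ a b : ℝ → ℝ} (hφ : ContDiff ℝ 1 φ)
    (hu : ContDiff ℝ 2 u) (hsupp : HasCompactSupport u) (hu0 : u 0 = 0)
    (ha : IntegrableOn a (Ioi 0)) (hb : IntegrableOn b (Ioi 0))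
    (h : ∀ x ∈ Ioi (0 : ℝ), a x ≤ b x + 2 * (deriv φ x * ⟪deriv u x, u x⟫ +
      φ x * (‖deriv u x‖ ^ 2 + ⟪deriv (deriv u) x, u x⟫))) :
    ∫ x in Ioi 0, a x ≤ ∫ x in Ioi 0, b x := by
  have hderiv : ∀ x, HasDerivAt (fun y => 2 * (φ y * ⟪deriv u y, u y⟫))
      (2 * (deriv φ x * ⟪deriv u x, u x⟫ +
        φ x * (‖deriv u x‖ ^ 2 + ⟪deriv (deriv u) x, u x⟫))) x := fun x =>
    (hasDerivAt_mul_inner_deriv_self ((hφ.differentiable one_ne_zero x).hasDerivAt) hu).const_mul 2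
  refine setIntegral_Ioi_le_of_le_add_deriv (g := fun y => 2 * (φ y * ⟪deriv u y, u y⟫))
    ?_ ?_ (by simp [hu0]) ha hb fun x hx => (hderiv x).deriv ▸ h x hx
  · exact contDiff_const.mul (hφ.mul ((hu.deriv' (n := 1)).inner ℝ (hu.of_le one_le_two)))
  · exact hsupp.mono <| Function.support_subset_iff'.2 fun x hx => by
      simp [Function.notMem_support.1 hx]

variable {W : ℝ → ℝ}

def schrodingerOp (W : ℝ → ℝ) (u : ℝ → E) (x : ℝ) : E :=
  -deriv (deriv u) x + W x • u x

theorem integrable_norm_sq_schrodingerOp (hW : Continuous W) (hu : ContDiff ℝ 2 u)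
    (hsupp : HasCompactSupport u) : Integrable fun x => ‖schrodingerOp W u x‖ ^ 2 :=
  (hsupp.deriv.deriv.neg.add (hsupp.smul_left (f := W))).integrable_norm_sq <|
    ((hu.deriv' (n := 1)).continuous_deriv le_rfl).neg.add (hW.smul hu.continuous)

theorem integral_mul_norm_sq_le_integral_norm_sq_schrodingerOp (hW : Continuous W)
    (hW1 : ∀ x : ℝ, 0 ≤ x → 1 ≤ W x) (hu : ContDiff ℝ 2 u) (hsupp : HasCompactSupport u)
    (hu0 : u 0 = 0) :
    ∫ x in Ioi 0, W x * ‖u x‖ ^ 2 ≤ ∫ x in Ioi 0, ‖schrodingerOp W u x‖ ^ 2 := by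
  refine setIntegral_Ioi_le_of_le_add_deriv_mul_inner (φ := fun _ => 1) contDiff_const hu hsupp
    hu0 (hsupp.integrable_mul_norm_sq hW hu.continuous).integrableOn
    (integrable_norm_sq_schrodingerOp hW hu hsupp).integrableOn fun x hx => ?_
  simpa [schrodingerOp] using
    mul_norm_sq_le_norm_neg_add_smul_sq (deriv (deriv u) x) (u x) (deriv u x) (hW1 x hx.le)

theorem integral_mul_norm_sq_deriv_add_integral_sq_mul_norm_sq_le (hW : ContDiff ℝ 1 W)
    (hW1 : ∀ x : ℝ, 0 ≤ x → 1 ≤ W x) {C : ℝ} (hW' : ∀ x : ℝ, 0 ≤ x → |deriv W x| ≤ C * W x)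
    (hu : ContDiff ℝ 2 u) (hsupp : HasCompactSupport u) (hu0 : u 0 = 0) :
    (∫ x in Ioi 0, W x * ‖deriv u x‖ ^ 2) + ∫ x in Ioi 0, W x ^ 2 * ‖u x‖ ^ 2 ≤
      (1 + C ^ 2) * ∫ x in Ioi 0, ‖schrodingerOp W u x‖ ^ 2 := by
  have hA : Integrable fun x => W x * ‖deriv u x‖ ^ 2 :=
    hsupp.deriv.integrable_mul_norm_sq hW.continuous (hu.continuous_deriv one_le_two)
  have hB : Integrable fun x => W x ^ 2 * ‖u x‖ ^ 2 :=
    hsupp.integrable_mul_norm_sq (hW.continuous.pow 2) hu.continuous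
  have hCQ : Integrable fun x => C ^ 2 * (W x * ‖u x‖ ^ 2) :=
    (hsupp.integrable_mul_norm_sq hW.continuous hu.continuous).const_mul _
  have hF := integrable_norm_sq_schrodingerOp hW.continuous hu hsupp
  have key : ∫ x in Ioi 0, (W x * ‖deriv u x‖ ^ 2 + W x ^ 2 * ‖u x‖ ^ 2) ≤
      ∫ x in Ioi 0, (‖schrodingerOp W u x‖ ^ 2 + C ^ 2 * (W x * ‖u x‖ ^ 2)) :=
    setIntegral_Ioi_le_of_le_add_deriv_mul_inner hW hu hsupp hu0 (hA.add hB).integrableOn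
      (hF.add hCQ).integrableOn fun x hx => by
        simpa [schrodingerOp] using weighted_norm_sq_le_norm_neg_add_smul_sq (deriv (deriv u) x)
          (u x) (deriv u x) (zero_le_one.trans (hW1 x hx.le)) (hW' x hx.le)
  rw [integral_add hA.integrableOn hB.integrableOn,
    integral_add hF.integrableOn hCQ.integrableOn, integral_const_mul] at key
  have hQF := integral_mul_norm_sq_le_integral_norm_sq_schrodingerOp hW.continuous hW1 hu hsupp hu0
  nlinarith [mul_le_mul_of_nonneg_left hQF (sq_nonneg C)]

theorem integral_norm_sq_deriv_deriv_le (hW : Continuous W) (hu : ContDiff ℝ 2 u)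
    (hsupp : HasCompactSupport u) :
    ∫ x in Ioi 0, ‖deriv (deriv u) x‖ ^ 2 ≤
      2 * (∫ x in Ioi 0, W x ^ 2 * ‖u x‖ ^ 2) + 2 * ∫ x in Ioi 0, ‖schrodingerOp W u x‖ ^ 2 := by
  have hB : Integrable fun x => W x ^ 2 * ‖u x‖ ^ 2 :=
    hsupp.integrable_mul_norm_sq (hW.pow 2) hu.continuous
  have hF := integrable_norm_sq_schrodingerOp hW hu hsupp
  calc ∫ x in Ioi 0, ‖deriv (deriv u) x‖ ^ 2
      ≤ ∫ x in Ioi 0, (2 * (W x ^ 2 * ‖u x‖ ^ 2) + 2 * ‖schrodingerOp W u x‖ ^ 2) :=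
        integral_mono (hsupp.deriv.deriv.integrable_norm_sq
          ((hu.deriv' (n := 1)).continuous_deriv le_rfl)).integrableOn
          ((hB.const_mul 2).fun_add (hF.const_mul 2)).integrableOn fun x =>
            norm_sq_le_norm_neg_add_smul_sq (deriv (deriv u) x) (u x) (W x)
    _ = _ := by
        rw [integral_add (hB.const_mul 2).integrableOn (hF.const_mul 2).integrableOn,
          integral_const_mul, integral_const_mul]

theorem schrodingerOp_graph_estimate (hW : ContDiff ℝ 1 W)
    (hW1 : ∀ x : ℝ, 0 ≤ x → 1 ≤ W x) {C : ℝ} (hW' : ∀ x : ℝ, 0 ≤ x → |deriv W x| ≤ C * W x)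
    (hu : ContDiff ℝ 2 u) (hsupp : HasCompactSupport u) (hu0 : u 0 = 0) :
    √(∫ x in Ioi 0, ‖deriv (deriv u) x‖ ^ 2) + √(∫ x in Ioi 0, W x ^ 2 * ‖u x‖ ^ 2) +
        √(∫ x in Ioi 0, W x * ‖deriv u x‖ ^ 2) ≤
      3 * √(4 + 2 * C ^ 2) * √(∫ x in Ioi 0, ‖schrodingerOp W u x‖ ^ 2) := by
  set F := ∫ x in Ioi 0, ‖schrodingerOp W u x‖ ^ 2
  have hsqrt : ∀ X, X ≤ (4 + 2 * C ^ 2) * F → √X ≤ √(4 + 2 * C ^ 2) * √F := fun X hX =>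
    (Real.sqrt_le_sqrt hX).trans_eq (Real.sqrt_mul (by positivity) F)
  have hA : 0 ≤ ∫ x in Ioi 0, W x * ‖deriv u x‖ ^ 2 :=
    setIntegral_nonneg measurableSet_Ioi fun x hx =>
      mul_nonneg (zero_le_one.trans (hW1 x hx.le)) (sq_nonneg _)
  have hB : 0 ≤ ∫ x in Ioi 0, W x ^ 2 * ‖u x‖ ^ 2 :=
    setIntegral_nonneg measurableSet_Ioi fun x _ => by positivity
  have hF : 0 ≤ F := setIntegral_nonneg measurableSet_Ioi fun x _ => by positivity
  have hAB := integral_mul_norm_sq_deriv_add_integral_sq_mul_norm_sq_le hW hW1 hW' hu hsupp hu0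
  have hT := integral_norm_sq_deriv_deriv_le hW.continuous hu hsupp
  have hCF := mul_nonneg (sq_nonneg C) hF
  linarith [hsqrt _ (by linarith : ∫ x in Ioi 0, ‖deriv (deriv u) x‖ ^ 2 ≤ _),
    hsqrt _ (by linarith : ∫ x in Ioi 0, W x ^ 2 * ‖u x‖ ^ 2 ≤ _),
    hsqrt _ (by linarith : ∫ x in Ioi 0, W x * ‖deriv u x‖ ^ 2 ≤ _)]

end InnerProductSpace

theorem halfline_schrodinger_graph_estimate_general (C₁ : ℝ) :
    ∃ c₁ : ℝ, 0 < c₁ ∧ ∀ W : ℝ → ℝ, ContDiff ℝ 1 W →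
      (∀ x : ℝ, 0 ≤ x → 1 ≤ W x) →
      (∀ x : ℝ, 0 ≤ x → |deriv W x| ≤ C₁ * W x) →
      ∀ u : ℝ → ℂ, ContDiff ℝ 2 u → HasCompactSupport u → u 0 = 0 →
        Real.sqrt (∫ x in Set.Ioi (0 : ℝ), ‖deriv (deriv u) x‖ ^ 2) +
            Real.sqrt (∫ x in Set.Ioi (0 : ℝ), W x ^ 2 * ‖u x‖ ^ 2) +
            Real.sqrt (∫ x in Set.Ioi (0 : ℝ), W x * ‖deriv u x‖ ^ 2) ≤
          c₁⁻¹ * Real.sqrt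
            (∫ x in Set.Ioi (0 : ℝ), ‖-deriv (deriv u) x + (W x : ℂ) * u x‖ ^ 2) := by
  refine ⟨(3 * √(4 + 2 * C₁ ^ 2))⁻¹, by positivity, fun W hW hW1 hW' u hu hsupp hu0 => ?_⟩
  simpa [schrodingerOp, Complex.real_smul] using
    schrodingerOp_graph_estimate hW hW1 hW' hu hsupp hu0

/-- Graph-norm estimate for the half-line Schrödinger
operator `u ↦ −u'' + W u` with Dirichlet condition at `0`, with a constant
depending only on the constant `C₁` in the bound `|W'| ≤ C₁ W`. -/
theorem halfline_schrodinger_graph_estimate (C₁ : ℝ) (hC₁ : 0 < C₁) :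
    ∃ c₁ : ℝ, 0 < c₁ ∧ ∀ W : ℝ → ℝ, ContDiff ℝ 1 W →
      (∀ x : ℝ, 0 ≤ x → 1 ≤ W x) →
      (∀ x : ℝ, 0 ≤ x → |deriv W x| ≤ C₁ * W x) →
      ∀ u : ℝ → ℂ, ContDiff ℝ 2 u → HasCompactSupport u → u 0 = 0 →
        Real.sqrt (∫ x in Set.Ioi (0 : ℝ), ‖deriv (deriv u) x‖ ^ 2) +
            Real.sqrt (∫ x in Set.Ioi (0 : ℝ), W x ^ 2 * ‖u x‖ ^ 2) +
            Real.sqrt (∫ x in Set.Ioi (0 : ℝ), W x * ‖deriv u x‖ ^ 2) ≤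
          c₁⁻¹ * Real.sqrt
            (∫ x in Set.Ioi (0 : ℝ), ‖-deriv (deriv u) x + (W x : ℂ) * u x‖ ^ 2) :=
  halfline_schrodinger_graph_estimate_general C₁
end
end

section
/- Let W : ℝ → ℝ be continuous with W(x) ≥ 1 for all x ≥ 0, and let ψ : ℝ → ℂ be twice continuously differentiable on [0, ∞) with ψ(0) = 0, ∫₀^∞ |ψ(x)|² dx < ∞, and ψ''(x) = W(x) ψ(x) for all x ≥ 0. Then ψ(x) = 0 for all x ≥ 0. -/
/-!
`v = ‖ψ‖²` satisfies `v'' = 2‖ψ'‖² + 2 W v ≥ 0`, so `v` is convex on `[0, ∞)`.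
Since `v 0 = 0 ≤ v`, convexity makes `v` nondecreasing, and a nondecreasing integrable
function on a half-line cannot take a positive value.
-/

open MeasureTheory Set Topology

theorem ContDiffOn.hasDerivAt_deriv_of_mem_nhds {𝕜 F : Type*} [NontriviallyNormedField 𝕜]
    [NormedAddCommGroup F] [NormedSpace 𝕜 F] {f : 𝕜 → F} {s : Set 𝕜} {x : 𝕜}
    (hf : ContDiffOn 𝕜 2 f s) (hs : UniqueDiffOn 𝕜 s) (hx : s ∈ 𝓝 x) :
    HasDerivAt (deriv f) (iteratedDerivWithin 2 f s x) x := by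
  have hfx : ContDiffAt 𝕜 2 f x := hf.contDiffAt hx
  rw [iteratedDerivWithin_eq_iteratedDeriv hs hfx (mem_of_mem_nhds hx), iteratedDeriv_succ,
    iteratedDeriv_one]
  exact ((hfx.derivWithin (m := 1) (by norm_num)).differentiableAt one_ne_zero).hasDerivAt

theorem ConvexOn.monotoneOn_Ici {f : ℝ → ℝ} {a : ℝ} (hf : ConvexOn ℝ (Ici a) f)
    (ha : ∀ x, a ≤ x → f a ≤ f x) : MonotoneOn f (Ici a) := by
  intro y (hy : a ≤ y) z (hz : a ≤ z) hyz
  rcases hy.eq_or_lt with rfl | hay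
  · exact ha z hz
  · exact hf.le_right_of_left_le'' self_mem_Ici hz hay hyz (ha y hy)

theorem MonotoneOn.nonpos_of_integrableOn_Ioi {f : ℝ → ℝ} {a : ℝ} (hf : MonotoneOn f (Ici a))
    (hint : IntegrableOn f (Ioi a)) {x : ℝ} (hx : a ≤ x) : f x ≤ 0 := by
  by_contra! hpos
  have hfin : volume.restrict (Ioi a) {y | f x ≤ f y} < ⊤ := hint.measure_ge_lt_top hpos
  have hsub : Ioi x ⊆ {y | f x ≤ f y} ∩ Ioi a := fun y (hy : x < y) =>
    ⟨hf hx (hx.trans hy.le) hy.le, hx.trans_lt hy⟩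
  have hinf : volume.restrict (Ioi a) {y | f x ≤ f y} = ⊤ := by
    rw [Measure.restrict_apply' measurableSet_Ioi, ← top_le_iff, ← Real.volume_Ioi (a := x)]
    exact measure_mono hsub
  exact hfin.ne hinf

theorem convexOn_norm_sq_of_hasDerivAt_two {E : Type*} [NormedAddCommGroup E]
    [InnerProductSpace ℝ E] {D : Set ℝ} (hD : Convex ℝ D) {ψ ψ' : ℝ → E} {W : ℝ → ℝ}
    (hc : ContinuousOn ψ D) (hψ : ∀ x ∈ interior D, HasDerivAt ψ (ψ' x) x)
    (hψ' : ∀ x ∈ interior D, HasDerivAt ψ' (W x • ψ x) x)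
    (hW : ∀ x ∈ interior D, 0 ≤ W x) :
    ConvexOn ℝ D (fun x => ‖ψ x‖ ^ 2) := by
  refine convexOn_of_hasDerivWithinAt2_nonneg hD (hc.norm.pow 2)
    (f' := fun x => 2 * inner ℝ (ψ x) (ψ' x))
    (f'' := fun x => 2 * (‖ψ' x‖ ^ 2 + W x * ‖ψ x‖ ^ 2))
    (fun x hx => (hψ x hx).norm_sq.hasDerivWithinAt)
    (fun x hx => ?_) (fun x hx => by have := hW x hx; positivity)
  refine (((hψ x hx).inner ℝ (hψ' x hx)).const_mul 2).hasDerivWithinAt.congr_deriv ?_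
  rw [inner_smul_right, real_inner_self_eq_norm_sq, real_inner_self_eq_norm_sq]
  ring

theorem no_L2_solution_halfline_general (W : ℝ → ℝ)
    (hW1 : ∀ x : ℝ, 0 ≤ x → 1 ≤ W x)
    (ψ : ℝ → ℂ) (hψ : ContDiffOn ℝ 2 ψ (Set.Ici 0)) (hψ0 : ψ 0 = 0)
    (hψL2 : IntegrableOn (fun x => ‖ψ x‖ ^ 2) (Set.Ioi 0))
    (hode : ∀ x : ℝ, 0 ≤ x →
      iteratedDerivWithin 2 ψ (Set.Ici 0) x = (W x : ℂ) * ψ x) :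
    ∀ x : ℝ, 0 ≤ x → ψ x = 0 := by
  have hconv : ConvexOn ℝ (Ici 0) (fun x => ‖ψ x‖ ^ 2) := by
    refine convexOn_norm_sq_of_hasDerivAt_two (convex_Ici 0) hψ.continuousOn
      (ψ' := deriv ψ) (W := W) (fun x hx => ?_) (fun x hx => ?_) (fun x hx => ?_) <;>
      rw [interior_Ici] at hx
    · exact ((hψ.contDiffAt (Ici_mem_nhds hx)).differentiableAt two_ne_zero).hasDerivAt
    · rw [Complex.real_smul, ← hode x hx.le]
      exact hψ.hasDerivAt_deriv_of_mem_nhds (uniqueDiffOn_Ici 0) (Ici_mem_nhds hx)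
    · exact zero_le_one.trans (hW1 x hx.le)
  have hmono : MonotoneOn (fun x => ‖ψ x‖ ^ 2) (Ici 0) :=
    hconv.monotoneOn_Ici fun x _ => by simp [hψ0]
  intro x hx
  simpa using hmono.nonpos_of_integrableOn_Ioi hψL2 hx

/-- A square-integrable solution of `ψ'' = W ψ` on the
half-line with `W ≥ 1` and `ψ(0) = 0` vanishes identically on `[0, ∞)`. -/
theorem no_L2_solution_halfline (W : ℝ → ℝ) (hWc : Continuous W)
    (hW1 : ∀ x : ℝ, 0 ≤ x → 1 ≤ W x)
    (ψ : ℝ → ℂ) (hψ : ContDiffOn ℝ 2 ψ (Set.Ici 0)) (hψ0 : ψ 0 = 0)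
    (hψL2 : IntegrableOn (fun x => ‖ψ x‖ ^ 2) (Set.Ioi 0))
    (hode : ∀ x : ℝ, 0 ≤ x →
      iteratedDerivWithin 2 ψ (Set.Ici 0) x = (W x : ℂ) * ψ x) :
    ∀ x : ℝ, 0 ≤ x → ψ x = 0 :=
  no_L2_solution_halfline_general W hW1 ψ hψ hψ0 hψL2 hode
end
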